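/- The derivations ℓ₀, ℓ₂, ℓ₄, ℓ₆ of the polynomial ring ℂ[λ₄, λ₆, λ₈, λ₁₀] satisfy the commutation relations: [ℓ₀, ℓ₂] = 2ℓ₂, [ℓ₀, ℓ₄] = 4ℓ₄, [ℓ₀, ℓ₆] = 6ℓ₆, [ℓ₂, ℓ₄] = (8/5)λ₆ ℓ₀ − (8/5)λ₄ ℓ₂ + 2 ℓ₆, [ℓ₂, ℓ₆] = (4/5)λ₈ ℓ₀ − (4/5)λ₄ ℓ₄, and [ℓ₄, ℓ₆] = −2λ₁₀ ℓ₀ + (6/5)λ₈ ℓ₂ − (6/5)λ₆ ℓ₄ + 2λ₄ ℓ₆, where for derivations the bracket is [A,B] = AB − BA and multiplication of a derivation by a polynomial is pointwise. -/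

import Mathlib

/- STATEMENT 4: commutation relations for the derivations ℓ₀, ℓ₂, ℓ₄, ℓ₆ of
   ℂ[lam4, lam6, lam8, lam10], where (ℓ₀,ℓ₂,ℓ₄,ℓ₆)ᵀ = T ∇_λ. -/

open MvPolynomial

noncomputable section

/-- The polynomial ring ℂ[lam4, lam6, lam8, lam10]; variable `X i` is λ_{2i+4}. -/
abbrev Rg2 : Type := MvPolynomial (Fin 4) ℂ

def lam4 : Rg2 := X 0
def lam6 : Rg2 := X 1
def lam8 : Rg2 := X 2
def lam10 : Rg2 := X 3

/-- Partial derivative ∂_{λ_{2i+4}}. -/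
def D (i : Fin 4) (p : Rg2) : Rg2 := pderiv i p

/-- ℓ₀ = 4lam4∂_{lam4} + 6lam6∂_{lam6} + 8lam8∂_{lam8} + 10lam10∂_{lam10}. -/
def ell0 (p : Rg2) : Rg2 :=
  4 * lam4 * D 0 p + 6 * lam6 * D 1 p + 8 * lam8 * D 2 p + 10 * lam10 * D 3 p

/-- ℓ₂ = 6lam6∂_{lam4} + (8lam8 − (12/5)lam4²)∂_{lam6} + (10lam10 − (8/5)lam4lam6)∂_{lam8} − (4/5)lam4lam8∂_{lam10}. -/
def ell2 (p : Rg2) : Rg2 :=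
  6 * lam6 * D 0 p + (8 * lam8 - C ((12 : ℂ) / 5) * lam4 ^ 2) * D 1 p +
    (10 * lam10 - C ((8 : ℂ) / 5) * lam4 * lam6) * D 2 p - C ((4 : ℂ) / 5) * lam4 * lam8 * D 3 p

/-- ℓ₄ = 8lam8∂_{lam4} + (10lam10 − (8/5)lam4lam6)∂_{lam6} + (4lam4lam8 − (12/5)lam6²)∂_{lam8}
  + (6lam4lam10 − (6/5)lam6lam8)∂_{lam10}. -/
def ell4 (p : Rg2) : Rg2 :=
  8 * lam8 * D 0 p + (10 * lam10 - C ((8 : ℂ) / 5) * lam4 * lam6) * D 1 p +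
    (4 * lam4 * lam8 - C ((12 : ℂ) / 5) * lam6 ^ 2) * D 2 p +
    (6 * lam4 * lam10 - C ((6 : ℂ) / 5) * lam6 * lam8) * D 3 p

/-- ℓ₆ = 10lam10∂_{lam4} − (4/5)lam4lam8∂_{lam6} + (6lam4lam10 − (6/5)lam6lam8)∂_{lam8}
  + (4lam6lam10 − (8/5)lam8²)∂_{lam10}. -/
def ell6 (p : Rg2) : Rg2 :=
  10 * lam10 * D 0 p - C ((4 : ℂ) / 5) * lam4 * lam8 * D 1 p +
    (6 * lam4 * lam10 - C ((6 : ℂ) / 5) * lam6 * lam8) * D 2 p +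
    (4 * lam6 * lam10 - C ((8 : ℂ) / 5) * lam8 ^ 2) * D 3 p


/-! A derivation of a polynomial ring is determined by its values on the variables, and so is the
commutator of two derivations. Hence each relation `[ℓ_a, ℓ_b] = ∑ c_m ℓ_m` reduces to the four
polynomial identities `ℓ_a (T b k) - ℓ_b (T a k) = ∑ c_m T m k`, one for each variable `λ_k`. -/

@[simp]
theorem Derivation.map_ofNat {R A M : Type*} [CommSemiring R] [CommSemiring A] [AddCommMonoid M]
    [Algebra R A] [Module A M] [Module R M] (D : Derivation R A M) (n : ℕ) [n.AtLeastTwo] :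
    D (no_index (OfNat.ofNat n : A)) = 0 :=
  D.map_natCast n

theorem Derivation.finset_sum_apply {ι R A M : Type*} [CommSemiring R] [CommSemiring A]
    [AddCommMonoid M] [Algebra R A] [Module A M] [Module R M] (s : Finset ι)
    (D : ι → Derivation R A M) (a : A) : (∑ i ∈ s, D i) a = ∑ i ∈ s, D i a := by
  rw [← Derivation.coeFnAddMonoidHom_apply, map_sum, Finset.sum_apply]
  rfl

namespace MvPolynomial

variable {R σ : Type*} [CommRing R]

section Fintype

variable [Fintype σ] [DecidableEq σ]

theorem mkDerivation_eq_sum_smul_pderiv (a : σ → MvPolynomial σ R) :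
    mkDerivation R a = ∑ i, a i • pderiv i :=
  derivation_ext fun j => by
    simp [mkDerivation_X, Derivation.finset_sum_apply, pderiv_X, Pi.single_apply]

theorem mkDerivation_apply_eq_sum (a : σ → MvPolynomial σ R) (p : MvPolynomial σ R) :
    mkDerivation R a p = ∑ i, a i * pderiv i p := by
  simp [mkDerivation_eq_sum_smul_pderiv, Derivation.finset_sum_apply]

end Fintype

theorem lie_mkDerivation_eq {a b : σ → MvPolynomial σ R}
    {E : Derivation R (MvPolynomial σ R) (MvPolynomial σ R)}
    (h : ∀ k, mkDerivation R a (b k) - mkDerivation R b (a k) = E (X k)) :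
    ⁅mkDerivation R a, mkDerivation R b⁆ = E :=
  derivation_ext fun k => by rw [Derivation.commutator_apply, mkDerivation_X, mkDerivation_X, h]

end MvPolynomial

def T : Matrix (Fin 4) (Fin 4) Rg2 :=
  !![4 * lam4, 6 * lam6, 8 * lam8, 10 * lam10;
    6 * lam6, 8 * lam8 - C ((12 : ℂ) / 5) * lam4 ^ 2, 10 * lam10 - C ((8 : ℂ) / 5) * lam4 * lam6,
      -(C ((4 : ℂ) / 5) * lam4 * lam8);
    8 * lam8, 10 * lam10 - C ((8 : ℂ) / 5) * lam4 * lam6,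
      4 * lam4 * lam8 - C ((12 : ℂ) / 5) * lam6 ^ 2, 6 * lam4 * lam10 - C ((6 : ℂ) / 5) * lam6 * lam8;
    10 * lam10, -(C ((4 : ℂ) / 5) * lam4 * lam8), 6 * lam4 * lam10 - C ((6 : ℂ) / 5) * lam6 * lam8,
      4 * lam6 * lam10 - C ((8 : ℂ) / 5) * lam8 ^ 2]

/-- `ell i` is the derivation `ℓ_{2i}`, the `i`-th entry of `T ∇_λ`. -/
def ell (i : Fin 4) : Derivation ℂ Rg2 Rg2 := mkDerivation ℂ (T i)

theorem ell_apply (i : Fin 4) (p : Rg2) : ell i p = ∑ k, T i k * D k p :=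
  mkDerivation_apply_eq_sum _ _

theorem ell0_eq : ell0 = ell 0 := by
  funext p; simp [ell_apply, ell0, Fin.sum_univ_four, T]

theorem ell2_eq : ell2 = ell 1 := by
  funext p; simp [ell_apply, ell2, Fin.sum_univ_four, T]; ring

theorem ell4_eq : ell4 = ell 2 := by
  funext p; simp [ell_apply, ell4, Fin.sum_univ_four, T]

theorem ell6_eq : ell6 = ell 3 := by
  funext p; simp [ell_apply, ell6, Fin.sum_univ_four, T]; ring

/- The polynomial identities are checked pointwise over `ℂ` (`MvPolynomial.funext`), where `ring`
can handle the coefficients `C (k / 5)`. -/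

-- `ℓ₀` is the Euler field of the grading `deg λ_j = j`, and `T i k` is homogeneous of degree `2i + 2k + 4`.
theorem lie_ell_zero (i : Fin 4) : ⁅ell 0, ell i⁆ = ((2 * i.val : ℕ) : Rg2) • ell i :=
  lie_mkDerivation_eq fun k => by
    fin_cases i <;> fin_cases k <;> refine MvPolynomial.funext fun x => ?_ <;>
      simp [T, ell, lam4, lam6, lam8, lam10] <;> ring

theorem lie_ell_one_two :
    ⁅ell 1, ell 2⁆ = (C ((8 : ℂ) / 5) * lam6) • ell 0 - (C ((8 : ℂ) / 5) * lam4) • ell 1 +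
      (2 : Rg2) • ell 3 :=
  lie_mkDerivation_eq fun k => by
    fin_cases k <;> refine MvPolynomial.funext fun x => ?_ <;>
      simp [T, ell, lam4, lam6, lam8, lam10] <;> ring

theorem lie_ell_one_three :
    ⁅ell 1, ell 3⁆ = (C ((4 : ℂ) / 5) * lam8) • ell 0 - (C ((4 : ℂ) / 5) * lam4) • ell 2 :=
  lie_mkDerivation_eq fun k => by
    fin_cases k <;> refine MvPolynomial.funext fun x => ?_ <;>
      simp [T, ell, lam4, lam6, lam8, lam10] <;> ring

theorem lie_ell_two_three :
    ⁅ell 2, ell 3⁆ = (-2 * lam10) • ell 0 + (C ((6 : ℂ) / 5) * lam8) • ell 1 -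
      (C ((6 : ℂ) / 5) * lam6) • ell 2 + (2 * lam4) • ell 3 :=
  lie_mkDerivation_eq fun k => by
    fin_cases k <;> refine MvPolynomial.funext fun x => ?_ <;>
      simp [T, ell, lam4, lam6, lam8, lam10] <;> ring

theorem ell_commutation_relations :
    (∀ p : Rg2, ell0 (ell2 p) - ell2 (ell0 p) = 2 * ell2 p) ∧
    (∀ p : Rg2, ell0 (ell4 p) - ell4 (ell0 p) = 4 * ell4 p) ∧
    (∀ p : Rg2, ell0 (ell6 p) - ell6 (ell0 p) = 6 * ell6 p) ∧
    (∀ p : Rg2, ell2 (ell4 p) - ell4 (ell2 p) =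
      C ((8 : ℂ) / 5) * lam6 * ell0 p - C ((8 : ℂ) / 5) * lam4 * ell2 p + 2 * ell6 p) ∧
    (∀ p : Rg2, ell2 (ell6 p) - ell6 (ell2 p) =
      C ((4 : ℂ) / 5) * lam8 * ell0 p - C ((4 : ℂ) / 5) * lam4 * ell4 p) ∧
    (∀ p : Rg2, ell4 (ell6 p) - ell6 (ell4 p) =
      -2 * lam10 * ell0 p + C ((6 : ℂ) / 5) * lam8 * ell2 p - C ((6 : ℂ) / 5) * lam6 * ell4 p +
        2 * lam4 * ell6 p) := by
  have apply_lie {a b : Fin 4} {E : Derivation ℂ Rg2 Rg2} (h : ⁅ell a, ell b⁆ = E) (p : Rg2) :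
      ell a (ell b p) - ell b (ell a p) = E p := by
    rw [← h, Derivation.commutator_apply]
  rw [ell0_eq, ell2_eq, ell4_eq, ell6_eq]
  refine ⟨fun p => ?_, fun p => ?_, fun p => ?_, fun p => ?_, fun p => ?_, fun p => ?_⟩
  · simpa using apply_lie (lie_ell_zero 1) p
  · simpa using apply_lie (lie_ell_zero 2) p
  · simpa using apply_lie (lie_ell_zero 3) p
  · simpa using apply_lie lie_ell_one_two p
  · simpa using apply_lie lie_ell_one_three p
  · simpa using apply_lie lie_ell_two_three p
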